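/- arXiv:math/0003169 — 3 statements merged into one kernel-verified Lean document; each statement's English description precedes it below -/
import Mathlib

section
/- Let $n \ge 3$ be an integer, and let $p(t)$ be a polynomial of degree $n$ with real coefficients such that $p(0) = 1$ and $p(-1) = p(-2) = \cdots = p(-n+3) = 0$ (no conditions if $n = 3$). Write the leading coefficient of $p$ as $d/n!$ and the coefficient of $t^{n-1}$ as $(\beta + dr)/(2(n-1)!)$ for real numbers $d, \beta, r$ with $d \ge 1$, $\beta \ge 0$, $r > n - 3$. If additionally $(-1)^n p(-n+2) \ge 0$, then $p(1) > 0$. -/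
/-!
The vanishing conditions give `p = (t + 1) ⋯ (t + m) · q` with `m = n - 3` and `q` a cubic
`a t³ + b t² + c t + e`. For such a cubic and `M = m + 1` one has
`M q(1) + q(-M) = (M + 1) (M (b - m a) + e)`. Multiplying by `m!` and reading `a`, `b` off the
two top coefficients of `p` and `e` off `p(0) = m! e` turns this into
`p(1) = n - 1 + (-1)ⁿ p(2 - n) + (β + d (r - n + 3)) / 2`, all of whose terms are nonnegative
and the first positive.
-/

open Polynomial Finset
open scoped Nat

noncomputable def shiftedPochhammer (R : Type*) [CommRing R] (m : ℕ) : R[X] :=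
  ∏ j ∈ range m, (X + C ((j : R) + 1))

section shiftedPochhammer

variable {R : Type*} [CommRing R]

theorem monic_shiftedPochhammer (m : ℕ) : (shiftedPochhammer R m).Monic :=
  monic_prod_of_monic _ _ fun _ _ => monic_X_add_C _

theorem natDegree_shiftedPochhammer [Nontrivial R] (m : ℕ) :
    (shiftedPochhammer R m).natDegree = m := by
  simp only [shiftedPochhammer, natDegree_prod_of_monic _ _ fun _ _ => monic_X_add_C _,
    natDegree_X_add_C, sum_const, card_range, smul_eq_mul, mul_one]

theorem two_mul_nextCoeff_shiftedPochhammer (m : ℕ) :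
    2 * (shiftedPochhammer R m).nextCoeff = m * (m + 1) := by
  rw [shiftedPochhammer, Monic.nextCoeff_prod _ _ fun _ _ => monic_X_add_C _]
  simp only [nextCoeff_X_add_C]
  induction m with
  | zero => simp
  | succ m ih => rw [sum_range_succ, mul_add, ih]; push_cast; ring

theorem shiftedPochhammer_eval (m : ℕ) (x : R) :
    (shiftedPochhammer R m).eval x = ∏ j ∈ range m, (x + (j + 1)) := by
  simp [shiftedPochhammer, eval_prod]

theorem shiftedPochhammer_eval_zero (m : ℕ) : (shiftedPochhammer R m).eval 0 = m ! := by
  simp [shiftedPochhammer_eval, ← prod_range_add_one_eq_factorial]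

theorem shiftedPochhammer_eval_one (m : ℕ) : (shiftedPochhammer R m).eval 1 = (m + 1)! := by
  rw [shiftedPochhammer_eval, ← prod_range_add_one_eq_factorial, prod_range_succ']
  push_cast
  rw [mul_one]
  exact prod_congr rfl fun j _ => by ring

theorem shiftedPochhammer_eval_neg_succ (m : ℕ) :
    (shiftedPochhammer R m).eval (-((m : R) + 1)) = (-1) ^ m * m ! := by
  rw [shiftedPochhammer_eval]
  calc ∏ j ∈ range m, (-((m : R) + 1) + (j + 1))
      = ∏ j ∈ range m, (-1) * (((m - 1 - j : ℕ) : R) + 1) := prod_congr rfl fun j hj => by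
        rw [Nat.cast_sub (by simp at hj; omega), Nat.cast_sub (by simp at hj; omega)]
        push_cast
        ring
    _ = (-1) ^ m * m ! := by
      rw [prod_mul_distrib, prod_const, card_range, prod_range_reflect (fun j => (j : R) + 1),
        ← prod_range_add_one_eq_factorial]
      push_cast
      rfl

theorem shiftedPochhammer_dvd {K : Type*} [Field K] [CharZero K] {p : K[X]} {m : ℕ}
    (hp : ∀ j : ℕ, 1 ≤ j → j ≤ m → p.eval (-(j : K)) = 0) :
    shiftedPochhammer K m ∣ p := by
  have hinj : Function.Injective fun j : ℕ => -((j : K) + 1) := fun i j h => by simpa using h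
  have hX : ∀ j : ℕ, X + C ((j : K) + 1) = X - C (-((j : K) + 1)) := fun j => by
    rw [map_neg, sub_neg_eq_add]
  simp only [shiftedPochhammer, hX]
  refine prod_dvd_of_coprime ((pairwise_coprime_X_sub_C hinj).set_pairwise _) fun j hj => ?_
  rw [dvd_iff_isRoot, IsRoot, ← Nat.cast_succ]
  exact hp _ (by omega) (by simpa using hj)

end shiftedPochhammer

theorem Polynomial.nextCoeff_monic_mul {R : Type*} [CommRing R] {s : R[X]} (hs : s.Monic)
    (q : R[X]) :
    (s * q).nextCoeff = s.nextCoeff * q.leadingCoeff + q.nextCoeff := by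
  nontriviality R
  rcases eq_or_ne q 0 with rfl | hq
  · simp
  simp only [← coeff_one_reverse]
  rw [reverse_mul (by simpa [hs.leadingCoeff] using hq), mul_coeff_one, coeff_zero_reverse,
    coeff_zero_reverse, hs.leadingCoeff, one_mul]
  exact add_comm _ _

theorem mul_eval_one_add_eval_neg_of_natDegree_le_three {R : Type*} [CommRing R] {q : R[X]}
    (hq : q.natDegree ≤ 3) (M : R) :
    M * q.eval 1 + q.eval (-M) =
      (M + 1) * (M * (q.coeff 2 - (M - 1) * q.coeff 3) + q.coeff 0) := by
  simp only [eval_eq_sum_range' (Nat.lt_succ_of_le hq), sum_range_succ, sum_range_zero]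
  ring

theorem eval_one_add_neg_one_pow_mul_eval_of_shiftedPochhammer_dvd {K : Type*} [Field K]
    [CharZero K] {p : K[X]} {m : ℕ} (hdvd : shiftedPochhammer K m ∣ p)
    (hdeg : p.natDegree = m + 3) :
    p.eval 1 + (-1) ^ m * p.eval (-((m : K) + 1)) =
      (m + 2) * ((m + 1)! * (p.coeff (m + 2) - m * (m + 3) / 2 * p.coeff (m + 3)) + p.eval 0) := by
  obtain ⟨q, rfl⟩ := hdvd
  have hq0 : q ≠ 0 := by rintro rfl; simp at hdeg
  have hq3 : q.natDegree = 3 := by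
    rw [(monic_shiftedPochhammer m).natDegree_mul' hq0, natDegree_shiftedPochhammer] at hdeg
    omega
  have hlead : (shiftedPochhammer K m * q).coeff (m + 3) = q.coeff 3 := by
    rw [← hdeg, ← leadingCoeff, leadingCoeff_monic_mul (monic_shiftedPochhammer m),
      leadingCoeff, hq3]
  have hnext : (shiftedPochhammer K m * q).coeff (m + 2) =
      (shiftedPochhammer K m).nextCoeff * q.coeff 3 + q.coeff 2 := by
    have h := nextCoeff_monic_mul (monic_shiftedPochhammer m) q
    rwa [nextCoeff_of_natDegree_pos (p := shiftedPochhammer K m * q) (by omega), hdeg,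
      nextCoeff_of_natDegree_pos (p := q) (by omega), hq3, leadingCoeff, hq3] at h
  have hsign : ((-1 : K) ^ m) ^ 2 = 1 := by rw [← pow_mul, mul_comm, pow_mul]; simp
  simp only [eval_mul, shiftedPochhammer_eval_zero, shiftedPochhammer_eval_one,
    shiftedPochhammer_eval_neg_succ, hlead, hnext]
  rw [← coeff_zero_eq_eval_zero q]
  push_cast [Nat.factorial_succ]
  linear_combination
    (m ! : K) * mul_eval_one_add_eval_neg_of_natDegree_le_three hq3.le ((m : K) + 1)
      - (m + 2) * (m + 1) * m ! * q.coeff 3 / 2 * two_mul_nextCoeff_shiftedPochhammer (R := K) m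
      + (m ! : K) * q.eval (-((m : K) + 1)) * hsign

theorem eval_one_eq_of_vanishing {K : Type*} [Field K] [CharZero K] {n : ℕ} (hn : 3 ≤ n)
    {p : K[X]} {d β r : K} (hdeg : p.natDegree = n) (hp0 : p.eval 0 = 1)
    (hvan : ∀ j : ℕ, 1 ≤ j → j ≤ n - 3 → p.eval (-(j : K)) = 0)
    (hlead : p.coeff n = d / n !) (hcoeff : p.coeff (n - 1) = (β + d * r) / (2 * (n - 1)!)) :
    p.eval 1 = n - 1 + (-1) ^ n * p.eval (-((n : K) - 2)) + (β + d * (r - n + 3)) / 2 := by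
  obtain ⟨m, rfl⟩ : ∃ m, n = m + 3 := ⟨n - 3, by omega⟩
  have h := eval_one_add_neg_one_pow_mul_eval_of_shiftedPochhammer_dvd
    (shiftedPochhammer_dvd fun j h1 h2 => hvan j h1 (by omega)) hdeg
  rw [show m + 3 - 1 = m + 2 from rfl] at hcoeff
  rw [hlead, hcoeff, hp0] at h
  have hpt : -(((m + 3 : ℕ) : K) - 2) = -((m : K) + 1) := by push_cast; ring
  rw [hpt]
  have hm2 : (m : K) + 2 ≠ 0 := by norm_cast
  have hcoef :
      ((m + 1)! : K) * ((β + d * r) / (2 * (m + 2)!) - m * (m + 3) / 2 * (d / (m + 3)!)) =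
        (β + d * (r - m)) / (2 * (m + 2)) := by
    have hm1 : ((m + 1)! : K) ≠ 0 := Nat.cast_ne_zero.mpr (m + 1).factorial_ne_zero
    have hm3 : (m : K) + 3 ≠ 0 := by norm_cast
    have hf2 : ((m + 2)! : K) = (m + 2) * (m + 1)! := by push_cast [Nat.factorial_succ]; ring
    have hf3 : ((m + 3)! : K) = (m + 3) * (m + 2) * (m + 1)! := by
      push_cast [Nat.factorial_succ]; ring
    rw [hf2, hf3]
    field_simp
    ring
  rw [hcoef] at h
  field_simp at h
  push_cast
  linear_combination h / 2

/-- Ambro's non-vanishing lemma, arithmetic core: a degree-`n` real polynomial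
with `p 0 = 1`, `p (-1) = ⋯ = p (-(n-3)) = 0`, leading coefficient `d / n!`,
coefficient of `t^(n-1)` equal to `(β + d r)/(2 (n-1)!)`, with `d ≥ 1`, `β ≥ 0`,
`r > n - 3`, and `(-1)^n p (-(n-2)) ≥ 0`, satisfies `p 1 > 0`. -/
theorem stmt0 (n : ℕ) (hn : 3 ≤ n) (p : Polynomial ℝ) (d β r : ℝ)
    (hdeg : p.natDegree = n)
    (hp0 : p.eval 0 = 1)
    (hvan : ∀ j : ℕ, 1 ≤ j → j ≤ n - 3 → p.eval (-(j : ℝ)) = 0)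
    (hlead : p.coeff n = d / (Nat.factorial n))
    (hcoeff : p.coeff (n - 1) = (β + d * r) / (2 * (Nat.factorial (n - 1))))
    (hd : 1 ≤ d) (hβ : 0 ≤ β) (hr : r > (n : ℝ) - 3)
    (hpos : 0 ≤ (-1 : ℝ) ^ n * p.eval (-((n : ℝ) - 2))) :
    0 < p.eval 1 := by
  rw [eval_one_eq_of_vanishing hn hdeg hp0 hvan hlead hcoeff]
  have hn' : (3 : ℝ) ≤ n := by exact_mod_cast hn
  have hdr : 0 < d * (r - n + 3) := mul_pos (by linarith) (by linarith)
  linarith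
end

section
/- Let $p(t) = \frac{d}{6}t^3 + \frac{-r'd + \delta}{4}t^2 + bt + c$ be a cubic polynomial with real coefficients, where $d > 0$, $\delta \ge 0$, let $m \ge 2$ be an integer, and let $r'$ be a real number with $r' < m - 1$ (where $r' < 0$ is allowed); assume $-p(-1) \ge 0$ and $p(m-1) \ge 0$. Then $p(m) = \frac{(m-1)(m+1)d}{3} + \frac{(m+1)(-r'd+\delta)}{4} + \frac{-p(-1) + (m+1)p(m-1)}{m}$, and if moreover $-r'd + \delta \ge 0$ then $p(m) > 0$. -/
/-- The cubic-polynomial computation for a 3-dimensional minimal LC center `W`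
in a Gorenstein canonical Fano 4-fold: for
`p(t) = (d/6) t³ + ((-r'd + δ)/4) t² + b t + c` with `d > 0`, `δ ≥ 0`,
an integer `m ≥ 2`, `r' < m - 1`, `-p(-1) ≥ 0` and `p(m-1) ≥ 0`, we have the
identity expressing `p(m)`, and if moreover `-r'd + δ ≥ 0` then `p(m) > 0`. -/
theorem stmt3 (d δ r' b c : ℝ) (m : ℤ) (hd : 0 < d) (hδ : 0 ≤ δ)
    (hm : 2 ≤ m) (hr' : r' < (m : ℝ) - 1)
    (p : ℝ → ℝ)
    (hp : ∀ t : ℝ, p t = d / 6 * t ^ 3 + (-r' * d + δ) / 4 * t ^ 2 + b * t + c)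
    (h1 : 0 ≤ -p (-1)) (h2 : 0 ≤ p ((m : ℝ) - 1)) :
    p (m : ℝ) = ((m : ℝ) - 1) * ((m : ℝ) + 1) * d / 3
        + ((m : ℝ) + 1) * (-r' * d + δ) / 4
        + (-p (-1) + ((m : ℝ) + 1) * p ((m : ℝ) - 1)) / (m : ℝ)
      ∧ (0 ≤ -r' * d + δ → 0 < p (m : ℝ)) := by
  have hM : (2 : ℝ) ≤ (m : ℝ) := by exact_mod_cast hm
  have hM0 : (m : ℝ) ≠ 0 := by linarith
  have key : p (m : ℝ) = ((m : ℝ) - 1) * ((m : ℝ) + 1) * d / 3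
        + ((m : ℝ) + 1) * (-r' * d + δ) / 4
        + (-p (-1) + ((m : ℝ) + 1) * p ((m : ℝ) - 1)) / (m : ℝ) := by
    rw [hp, hp, hp]
    field_simp
    ring
  refine ⟨key, fun h3 => ?_⟩
  rw [key]
  have t1 : 0 < ((m : ℝ) - 1) * ((m : ℝ) + 1) * d / 3 := by
    apply div_pos _ (by norm_num)
    apply mul_pos (mul_pos (by linarith) (by linarith)) hd
  have t2 : 0 ≤ ((m : ℝ) + 1) * (-r' * d + δ) / 4 := by positivity
  have t3 : 0 ≤ (-p (-1) + ((m : ℝ) + 1) * p ((m : ℝ) - 1)) / (m : ℝ) := by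
    apply div_nonneg _ (by linarith)
    have : 0 ≤ ((m : ℝ) + 1) * p ((m : ℝ) - 1) := by positivity
    linarith
  linarith
end

section
/- Let $n = \dim X$, $d \ge 1$ an integer and $r$ a rational number with $r > n - 3 \ge 0$. Suppose $p(t)$ is a polynomial of degree $n$ over $\mathbb{Q}$ satisfying: $p(0) = 1$, $p(-j) = 0$ for $1 \le j \le n-3$, the leading coefficient is $d/n!$, the coefficient of $t^{n-1}$ is $(\beta + dr)/(2(n-1)!)$ with $\beta \ge 0$, and $(-1)^n p(-n+2) \ge 0$. Then $p(1) = n - 1 + (-1)^n p(-n+2) + \frac{\beta + d(r - n + 3)}{2}$. -/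
/-!
Write `n = m + 3`. The `(m + 2)`-nd forward difference of `p` at `y = -n + 2` is an alternating
binomial sum of the values of `p` at `y, y + 1, …, y + m + 2 = 1`; all of them except those at
`y`, `0` and `1` vanish by hypothesis. On the other hand, for a polynomial of degree `≤ m + 3`
this forward difference only sees the two top coefficients, and is affine in `y`.
Comparing the two expressions gives the identity.
-/

open Finset Polynomial
open scoped fwdDiff Nat

section CommRing

variable {R : Type*} [CommRing R]

lemma fwdDiff_pow (j : ℕ) :
    Δ_[1] (fun r : R ↦ r ^ j) = ∑ i ∈ range j, j.choose i • fun r ↦ r ^ i := by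
  ext x
  simp [nsmul_eq_mul, fwdDiff, add_pow, sum_range_succ, mul_comm]

lemma two_mul_fwdDiff_iter_pow_succ (n : ℕ) (y : R) :
    2 * (Δ_[1] ^[n] (fun r : R ↦ r ^ (n + 1)) y) = (n + 1)! * (2 * y + n) := by
  induction n generalizing y with
  | zero => simp
  | succ n ih =>
    rw [Function.iterate_succ_apply, fwdDiff_pow, fwdDiff_iter_finsetSum, sum_range_succ,
      sum_range_succ, sum_eq_zero fun i hi ↦ by
        rw [fwdDiff_iter_const_smul, fwdDiff_iter_pow_eq_zero_of_lt (by simp at hi; lia),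
          smul_zero], zero_add]
    rw [fwdDiff_iter_const_smul, fwdDiff_iter_const_smul, Pi.add_apply, Pi.smul_apply,
      Pi.smul_apply, fwdDiff_iter_eq_factorial, nsmul_eq_mul, nsmul_eq_mul,
      Nat.choose_succ_self_right]
    have hchoose : ((n + 2).choose n * n ! * 2 : R) = (n + 2)! := by
      have := Nat.choose_mul_factorial_mul_factorial (by lia : n ≤ n + 2)
      rw [Nat.add_sub_cancel_left, Nat.factorial_two] at this
      exact_mod_cast congrArg (Nat.cast : ℕ → R) this
    have hih := ih y
    rw [Pi.natCast_apply]
    push_cast [Nat.factorial_succ] at hchoose hih ⊢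
    linear_combination (n + 2 : R) * hih + hchoose

lemma Polynomial.two_mul_fwdDiff_iter_eval_of_natDegree_le {f : R[X]} {m : ℕ}
    (hf : f.natDegree ≤ m + 1) (y : R) :
    2 * (Δ_[1] ^[m] f.eval y) =
      f.coeff (m + 1) * (m + 1)! * (2 * y + m) + 2 * f.coeff m * m ! := by
  have hsum : f.eval = ∑ i ∈ range (m + 2), f.coeff i • fun r ↦ r ^ i := by
    ext x
    simp [eval_eq_sum_range' (by lia : f.natDegree < m + 2)]
  rw [hsum, fwdDiff_iter_finsetSum, sum_range_succ, sum_range_succ, sum_eq_zero fun i hi ↦ by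
      rw [fwdDiff_iter_const_smul, fwdDiff_iter_pow_eq_zero_of_lt (by simp at hi; lia),
        smul_zero], zero_add, fwdDiff_iter_const_smul, fwdDiff_iter_const_smul, Pi.add_apply,
    Pi.smul_apply, Pi.smul_apply, fwdDiff_iter_eq_factorial, Pi.natCast_apply, smul_eq_mul,
    smul_eq_mul]
  linear_combination f.coeff (m + 1) * two_mul_fwdDiff_iter_pow_succ m y

end CommRing

lemma fwdDiff_iter_add_two_apply_of_vanishing {M G : Type*} [AddCommMonoid M] [AddCommGroup G]
    {f : M → G} {h y : M} {n : ℕ} (hf : ∀ k, 1 ≤ k → k ≤ n → f (y + k • h) = 0) :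
    Δ_[h] ^[n + 2] f y =
      (-1 : ℤ) ^ n • f y - (n + 2) • f (y + (n + 1) • h) + f (y + (n + 2) • h) := by
  rw [fwdDiff_iter_eq_sum_shift, sum_range_succ, sum_range_succ,
    sum_eq_single_of_mem 0 (by simp) fun k hk hk0 ↦ by
      rw [hf k (by lia) (by simp at hk; lia), smul_zero]]
  rw [Nat.sub_zero, Nat.choose_zero_right, zero_smul, add_zero,
    show n + 2 - (n + 1) = 1 by lia, Nat.sub_self, Nat.choose_succ_self_right, Nat.choose_self]
  module

theorem stmt10_general (n : ℕ) (hn : 3 ≤ n) (p : Polynomial ℚ) (d : ℤ) (β r : ℚ)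
    (hdeg : p.natDegree = n)
    (hp0 : p.eval 0 = 1)
    (hvan : ∀ j : ℕ, 1 ≤ j → j ≤ n - 3 → p.eval (-(j : ℚ)) = 0)
    (hlead : p.coeff n = (d : ℚ) / (Nat.factorial n))
    (hcoeff : p.coeff (n - 1) = (β + (d : ℚ) * r) / (2 * (Nat.factorial (n - 1)))) :
    p.eval 1 = (n : ℚ) - 1 + (-1 : ℚ) ^ n * p.eval (-(n : ℚ) + 2)
      + (β + (d : ℚ) * (r - (n : ℚ) + 3)) / 2 := by
  obtain ⟨m, rfl⟩ : ∃ m, n = m + 3 := ⟨n - 3, by lia⟩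
  set y : ℚ := -((m + 3 : ℕ) : ℚ) + 2
  have hvanish : ∀ k : ℕ, 1 ≤ k → k ≤ m → p.eval (y + k • 1) = 0 := by
    intro k hk hkm
    have hpt : y + k • (1 : ℚ) = -((m + 1 - k : ℕ) : ℚ) := by
      push_cast [y, Nat.cast_sub (by lia : k ≤ m + 1)]
      ring
    rw [hpt]
    exact hvan (m + 1 - k) (by lia) (by lia)
  have hdiff := p.two_mul_fwdDiff_iter_eval_of_natDegree_le (m := m + 2) hdeg.le y
  rw [fwdDiff_iter_add_two_apply_of_vanishing hvanish] at hdiff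
  have hzero : y + (m + 1) • (1 : ℚ) = 0 := by push_cast [y]; ring
  have hone : y + (m + 2) • (1 : ℚ) = 1 := by push_cast [y]; ring
  rw [hzero, hone, hp0, hlead] at hdiff
  rw [show m + 3 - 1 = m + 2 by lia] at hcoeff
  rw [hcoeff] at hdiff
  field_simp at hdiff
  push_cast [y, zsmul_eq_mul, nsmul_eq_mul] at hdiff ⊢
  linear_combination hdiff / 2

/-- The exact identity from Ambro's lemma: for a degree-`n` rational polynomial
`p` with `p 0 = 1`, `p (-j) = 0` for `1 ≤ j ≤ n - 3`, leading coefficient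
`d / n!` and coefficient of `t^(n-1)` equal to `(β + d r)/(2 (n-1)!)`
(`d ≥ 1` integer, `β ≥ 0`, `r > n - 3 ≥ 0`), with `(-1)^n p (-n+2) ≥ 0`,
one has `p 1 = n - 1 + (-1)^n p (-n+2) + (β + d (r - n + 3))/2`. -/
theorem stmt10 (n : ℕ) (hn : 3 ≤ n) (p : Polynomial ℚ) (d : ℤ) (β r : ℚ)
    (hdeg : p.natDegree = n)
    (hp0 : p.eval 0 = 1)
    (hvan : ∀ j : ℕ, 1 ≤ j → j ≤ n - 3 → p.eval (-(j : ℚ)) = 0)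
    (hlead : p.coeff n = (d : ℚ) / (Nat.factorial n))
    (hcoeff : p.coeff (n - 1) = (β + (d : ℚ) * r) / (2 * (Nat.factorial (n - 1))))
    (hd : 1 ≤ d) (hβ : 0 ≤ β) (hr : r > (n : ℚ) - 3)
    (hpos : 0 ≤ (-1 : ℚ) ^ n * p.eval (-(n : ℚ) + 2)) :
    p.eval 1 = (n : ℚ) - 1 + (-1 : ℚ) ^ n * p.eval (-(n : ℚ) + 2)
      + (β + (d : ℚ) * (r - (n : ℚ) + 3)) / 2 :=
  stmt10_general n hn p d β r hdeg hp0 hvan hlead hcoeff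
end
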